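/- arXiv:2211.03821 — 2 statements merged into one kernel-verified Lean document; each statement's English description precedes it below -/
import Mathlib

section
/- Let D ⊂ R^d be measurable with |D| < ∞, and for m ∈ N ∪ {∞} let D = ⋃_{j=1}^m D_j with |D_j| > 0 and D_j ∩ D_k = ∅ for j ≠ k. Let τ_j be translations of R^d such that τ_j(D_j) ∩ τ_k(D_k) = ∅ for j ≠ k, and set D̃ = ⋃_{j=1}^m τ_j(D_j). If B = {ψ_n}_{n∈N} ⊂ L²(D) is a Riesz basis for L²(D) with frame constants A and B, then B̃ = {x ↦ ∑_{j=1}^m χ_{τ_j(D_j)}(x) ψ_n(τ_j^{−1}x)}_{n∈N} is a Riesz basis for L²(D̃) with the same frame constants. -/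
open MeasureTheory Complex Set

/-- The complex exponential `e^{2πit}`. -/
noncomputable def e2 (t : ℝ) : ℂ := Complex.exp (2 * Real.pi * Complex.I * t)

/-- `v` is a Riesz basis for `L²(μ)` with frame constants `A ≤ B`. -/
def IsRieszBasisWith {α : Type*} [MeasurableSpace α] (μ : Measure α)
    {ι : Type*} (v : ι → α → ℂ) (A B : ℝ) : Prop :=
  0 < A ∧ A ≤ B ∧
  (∀ (s : Finset ι) (a : ι → ℂ),
      A * ∑ n ∈ s, ‖a n‖ ^ 2 ≤ (∫ x, ‖∑ n ∈ s, a n * v n x‖ ^ 2 ∂μ) ∧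
      (∫ x, ‖∑ n ∈ s, a n * v n x‖ ^ 2 ∂μ) ≤ B * ∑ n ∈ s, ‖a n‖ ^ 2) ∧
  (∀ w : α → ℂ, MemLp w 2 μ →
      A * (∫ x, ‖w x‖ ^ 2 ∂μ) ≤ (∑' n : ι, ‖∫ x, w x * (starRingEnd ℂ) (v n x) ∂μ‖ ^ 2) ∧
      (∑' n : ι, ‖∫ x, w x * (starRingEnd ℂ) (v n x) ∂μ‖ ^ 2) ≤ B * ∫ x, ‖w x‖ ^ 2 ∂μ)

/-! Gluing the translations `x ↦ x + τ_j` of the pieces `D_j` gives a map `D → D̃` which, up to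
null sets, is a measure-preserving bijection with inverse `y ↦ y - τ_j` on `τ_j(D_j)`. Composition
with this inverse is an isometry `L²(D) → L²(D̃)` carrying `ψ_n` to the `n`-th new function, so
every integral in the Riesz-basis inequalities is unchanged. -/

open Function

namespace MeasureTheory.MeasurePreserving

variable {α β : Type*} [MeasurableSpace α] [MeasurableSpace β] {μ : Measure α} {ν : Measure β}

theorem integral_comp_of_ae_leftInverse {E : Type*} [NormedAddCommGroup E] [NormedSpace ℝ E]
    {f : β → α} {g : α → β} (hf : MeasurePreserving f ν μ) (hg : MeasurePreserving g μ ν)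
    (hfg : ∀ᵐ x ∂μ, f (g x) = x) (h : α → E) : ∫ y, h (f y) ∂ν = ∫ x, h x ∂μ := by
  by_cases hh : AEStronglyMeasurable h μ
  · rw [← hf.map_eq] at hh ⊢
    exact (integral_map hf.aemeasurable hh).symm
  · -- if `h ∘ f` were measurable, so would be `h =ᵐ[μ] h ∘ f ∘ g`
    have hhf : ¬ AEStronglyMeasurable (fun y => h (f y)) ν := fun hhf =>
      hh ((hhf.comp_measurePreserving hg).congr (hfg.mono fun x hx => by simp [hx]))
    rw [integral_non_aestronglyMeasurable hh, integral_non_aestronglyMeasurable hhf]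

theorem restrict_iUnion {ι : Type*} [Countable ι] {F : α → β} {s : ι → Set α} {t : ι → Set β}
    (hF : Measurable F) (hs : ∀ j, MeasurableSet (s j)) (hsd : Pairwise (Disjoint on s))
    (ht : ∀ j, MeasurableSet (t j)) (htd : Pairwise (Disjoint on t))
    (hFj : ∀ j, MeasurePreserving F (μ.restrict (s j)) (ν.restrict (t j))) :
    MeasurePreserving F (μ.restrict (⋃ j, s j)) (ν.restrict (⋃ j, t j)) := by
  refine ⟨hF, ?_⟩
  rw [Measure.restrict_iUnion hsd hs, Measure.restrict_iUnion htd ht,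
    Measure.map_sum hF.aemeasurable]
  exact congrArg Measure.sum (funext fun j => (hFj j).map_eq)

variable {e : α ≃ᵐ β} {s : Set α}

theorem restrict_image_of_eqOn (he : MeasurePreserving e μ ν) {F : α → β} (hF : Measurable F)
    (hs : MeasurableSet s) (hFe : EqOn F e s) :
    MeasurePreserving F (μ.restrict s) (ν.restrict (e '' s)) :=
  (he.restrict_image_emb e.measurableEmbedding s).congr hF
    ((ae_restrict_mem hs).mono fun _ hx => (hFe hx).symm)

theorem restrict_image_of_eqOn_symm (he : MeasurePreserving e μ ν) {G : β → α}
    (hG : Measurable G) (hs : MeasurableSet s) (hGe : EqOn G e.symm (e '' s)) :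
    MeasurePreserving G (ν.restrict (e '' s)) (μ.restrict s) := by
  rw [e.image_eq_preimage_symm] at hGe ⊢
  exact ((he.symm e).restrict_preimage_emb e.symm.measurableEmbedding s).congr hG
    ((ae_restrict_mem (e.symm.measurable hs)).mono fun _ hy => (hGe hy).symm)

end MeasureTheory.MeasurePreserving

namespace IsRieszBasisWith

variable {α β ι : Type*} [MeasurableSpace α] [MeasurableSpace β] {μ : Measure α} {ν : Measure β}
  {v w : ι → α → ℂ} {A B : ℝ}

theorem congr_ae (hv : IsRieszBasisWith μ v A B) (hvw : ∀ n, v n =ᵐ[μ] w n) :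
    IsRieszBasisWith μ w A B := by
  obtain ⟨hA, hAB, hsyn, hanal⟩ := hv
  refine ⟨hA, hAB, fun s a => ?_, fun u hu => ?_⟩
  · have hsum : (fun x => ‖∑ n ∈ s, a n * v n x‖ ^ 2)
        =ᵐ[μ] fun x => ‖∑ n ∈ s, a n * w n x‖ ^ 2 := by
      filter_upwards [(Filter.eventually_all_finset s).2 fun n _ => hvw n] with x hx
      rw [Finset.sum_congr rfl fun n hn => by rw [hx n hn]]
    rw [← integral_congr_ae hsum]
    exact hsyn s a
  · have hinner (n : ι) :
        ∫ x, u x * starRingEnd ℂ (v n x) ∂μ = ∫ x, u x * starRingEnd ℂ (w n x) ∂μ :=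
      integral_congr_ae ((hvw n).mono fun x hx => by simp only [hx])
    simpa only [hinner] using hanal u hu

theorem comp_measurePreserving {f : β → α} {g : α → β} (hv : IsRieszBasisWith μ v A B)
    (hf : MeasurePreserving f ν μ) (hg : MeasurePreserving g μ ν) (hfg : ∀ᵐ x ∂μ, f (g x) = x)
    (hgf : ∀ᵐ y ∂ν, g (f y) = y) : IsRieszBasisWith ν (fun n => v n ∘ f) A B := by
  obtain ⟨hA, hAB, hsyn, hanal⟩ := hv
  refine ⟨hA, hAB, fun s a => ?_, fun w hw => ?_⟩
  · simpa only [comp_apply, hf.integral_comp_of_ae_leftInverse hg hfg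
      fun x => ‖∑ n ∈ s, a n * v n x‖ ^ 2] using hsyn s a
  · have hnorm : ∫ x, ‖w (g x)‖ ^ 2 ∂μ = ∫ y, ‖w y‖ ^ 2 ∂ν :=
      hg.integral_comp_of_ae_leftInverse hf hgf fun y => ‖w y‖ ^ 2
    have hinner (n : ι) : ∫ y, w y * starRingEnd ℂ (v n (f y)) ∂ν
        = ∫ x, w (g x) * starRingEnd ℂ (v n x) ∂μ := by
      rw [← hf.integral_comp_of_ae_leftInverse hg hfg]
      exact integral_congr_ae (hgf.mono fun y hy => by simp only [hy])
    simpa only [comp_apply, hinner, hnorm] using hanal (w ∘ g) (hw.comp_measurePreserving hg)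

end IsRieszBasisWith

section PairwiseDisjoint

variable {α β ι : Type*}

theorem tsum_indicator_apply_of_mem {M : Type*} [AddCommMonoid M] [TopologicalSpace M]
    {t : ι → Set α} (htd : Pairwise (Disjoint on t)) (g : ι → α → M) {j : ι} {x : α}
    (hx : x ∈ t j) : ∑' k, (t k).indicator (g k) x = g j x := by
  rw [tsum_eq_single j fun k hk => indicator_of_notMem (disjoint_right.1 (htd hk) hx) _,
    indicator_of_mem hx]

theorem exists_measurable_eqOn_of_pairwise_disjoint [Countable ι] [MeasurableSpace α]
    [MeasurableSpace β] [Nonempty β] {t : ι → Set α} (ht : ∀ j, MeasurableSet (t j))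
    (htd : Pairwise (Disjoint on t)) {g : ι → α → β} (hg : ∀ j, Measurable (g j)) :
    ∃ F : α → β, Measurable F ∧ ∀ j, EqOn F (g j) (t j) := by
  cases isEmpty_or_nonempty ι
  · exact ⟨fun _ => Classical.arbitrary β, measurable_const, isEmptyElim⟩
  · exact exists_measurable_piecewise t ht g hg fun j k hjk x hx =>
      (disjoint_left.1 (htd hjk) hx.1 hx.2).elim

variable {e : ι → α ≃ β} {s : ι → Set α} {F : α → β} {G : β → α}

theorem leftInvOn_iUnion_of_eqOn (hFe : ∀ j, EqOn F (e j) (s j))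
    (hGe : ∀ j, EqOn G (e j).symm (e j '' s j)) : LeftInvOn G F (⋃ j, s j) := by
  rintro x ⟨_, ⟨j, rfl⟩, hx⟩
  rw [hFe j hx, hGe j (mem_image_of_mem _ hx), Equiv.symm_apply_apply]

theorem rightInvOn_iUnion_of_eqOn (hFe : ∀ j, EqOn F (e j) (s j))
    (hGe : ∀ j, EqOn G (e j).symm (e j '' s j)) : RightInvOn G F (⋃ j, e j '' s j) := by
  rintro _ ⟨_, ⟨j, rfl⟩, x, hx, rfl⟩
  rw [hGe j (mem_image_of_mem _ hx), Equiv.symm_apply_apply, hFe j hx]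

end PairwiseDisjoint

theorem stmt_6_general {d : ℕ} {ι : Type*} [Countable ι]
    (D : Set (EuclideanSpace ℝ (Fin d)))
    (Dj : ι → Set (EuclideanSpace ℝ (Fin d)))
    (hDjmeas : ∀ j, MeasurableSet (Dj j))
    (hcover : D = ⋃ j, Dj j)
    (hdisj : ∀ j k : ι, j ≠ k → Disjoint (Dj j) (Dj k))
    (τ : ι → EuclideanSpace ℝ (Fin d))
    (hdisj' : ∀ j k : ι, j ≠ k →
      Disjoint ((fun x => x + τ j) '' Dj j) ((fun x => x + τ k) '' Dj k))
    (ψ : ℕ → EuclideanSpace ℝ (Fin d) → ℂ) (A B : ℝ)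
    (hψ : IsRieszBasisWith (volume.restrict D) ψ A B) :
    IsRieszBasisWith (volume.restrict (⋃ j, (fun x => x + τ j) '' Dj j))
      (fun (n : ℕ) x =>
        ∑' j : ι, Set.indicator ((fun y => y + τ j) '' Dj j) (fun z => ψ n (z - τ j)) x)
      A B := by
  subst hcover
  let e (j : ι) : EuclideanSpace ℝ (Fin d) ≃ᵐ EuclideanSpace ℝ (Fin d) :=
    MeasurableEquiv.addRight (τ j)
  have he (j : ι) : MeasurePreserving (e j) volume volume := measurePreserving_add_right _ (τ j)
  have hDj' (j : ι) : MeasurableSet (e j '' Dj j) := (e j).measurableSet_image.2 (hDjmeas j)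
  obtain ⟨F, hF, hFe⟩ :=
    exists_measurable_eqOn_of_pairwise_disjoint hDjmeas hdisj fun j => (e j).measurable
  obtain ⟨G, hG, hGe⟩ :=
    exists_measurable_eqOn_of_pairwise_disjoint hDj' hdisj' fun j => (e j).symm.measurable
  have hFmp := MeasurePreserving.restrict_iUnion hF hDjmeas hdisj hDj' hdisj' fun j =>
    (he j).restrict_image_of_eqOn hF (hDjmeas j) (hFe j)
  have hGmp := MeasurePreserving.restrict_iUnion hG hDj' hdisj' hDjmeas hdisj fun j =>
    (he j).restrict_image_of_eqOn_symm hG (hDjmeas j) (hGe j)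
  refine (hψ.comp_measurePreserving hGmp hFmp
    (ae_restrict_of_forall_mem (.iUnion hDjmeas) (leftInvOn_iUnion_of_eqOn hFe hGe))
    (ae_restrict_of_forall_mem (.iUnion hDj') (rightInvOn_iUnion_of_eqOn hFe hGe))).congr_ae
    fun n => ae_restrict_of_forall_mem (.iUnion hDj') ?_
  rintro y ⟨_, ⟨j, rfl⟩, hy⟩
  beta_reduce
  rw [comp_apply, hGe j hy, tsum_indicator_apply_of_mem hdisj' (fun k z => ψ n (z - τ k)) hy]
  simp [e, sub_eq_add_neg]

/-- Lemma: breaking a domain `D = ⋃ⱼ Dⱼ` into finitely or countably many pieces and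
translating them disjointly, a Riesz basis `{ψₙ}` of `L²(D)` transforms into the
Riesz basis `{∑ⱼ χ_{τⱼ(Dⱼ)} ψₙ∘τⱼ⁻¹}` of `L²(D̃)` with the same frame constants. -/
theorem stmt_6 {d : ℕ} {ι : Type*} [Countable ι]
    (D : Set (EuclideanSpace ℝ (Fin d))) (hDmeas : MeasurableSet D)
    (hDfin : volume D < ⊤)
    (Dj : ι → Set (EuclideanSpace ℝ (Fin d)))
    (hDjmeas : ∀ j, MeasurableSet (Dj j))
    (hcover : D = ⋃ j, Dj j)
    (hpos : ∀ j, 0 < volume (Dj j))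
    (hdisj : ∀ j k : ι, j ≠ k → Disjoint (Dj j) (Dj k))
    (τ : ι → EuclideanSpace ℝ (Fin d))
    (hdisj' : ∀ j k : ι, j ≠ k →
      Disjoint ((fun x => x + τ j) '' Dj j) ((fun x => x + τ k) '' Dj k))
    (ψ : ℕ → EuclideanSpace ℝ (Fin d) → ℂ) (A B : ℝ)
    (hψ : IsRieszBasisWith (volume.restrict D) ψ A B) :
    IsRieszBasisWith (volume.restrict (⋃ j, (fun x => x + τ j) '' Dj j))
      (fun (n : ℕ) x =>
        ∑' j : ι, Set.indicator ((fun y => y + τ j) '' Dj j) (fun z => ψ n (z - τ j)) x)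
      A B :=
  stmt_6_general D Dj hDjmeas hcover hdisj τ hdisj' ψ A B hψ
end

section
/- Let {λ_n}_{n∈Z} ⊂ R and let m ∈ N ∪ {∞}. The sequence {g_n}_{n∈Z}, where g_n(x) = ∑_{k=0}^{m−1} e^{2πi (x − b_k) λ_n} χ_{J_k}(x), is a Riesz basis for L²(J) if and only if {x ↦ e^{2πi x λ_n}}_{n∈Z} is a Riesz basis for L²([0,1)); moreover the two bases have the same Riesz (frame) constants. Conversely, the sequence {g̃_n}_{n∈Z}, where g̃_n(x) = ∑_{k=0}^{m−1} e^{2πi (x + b_k) λ_n} χ_{I_k}(x), is a Riesz basis for L²([0,1)) if and only if {x ↦ e^{2πi x λ_n}}_{n∈Z} is a Riesz basis for L²(J), with the same Riesz constants. -/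
open MeasureTheory Complex Set

/-!
The piecewise translation `x ↦ x + b_k` on `I_k` maps `[0,1)` onto `J` preserving Lebesgue
measure, with almost-everywhere inverse `y ↦ y - b_k` on `J_k`. Composition with a
measure-preserving map that has a measure-preserving a.e. inverse is a unitary
`L²(ν) → L²(μ)`, so it preserves both the synthesis and the frame inequalities with the same
constants. Finally `g_n` and `g̃_n` are exactly `e^{2πi x λ_n}` composed with these two
translations.
-/

open scoped Function

theorem MeasureTheory.MeasurePreserving.integral_comp_of_aestronglyMeasurable
    {α β G : Type*} [MeasurableSpace α] [MeasurableSpace β] [NormedAddCommGroup G]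
    [NormedSpace ℝ G] {μ : Measure α} {ν : Measure β} {φ : α → β}
    (hφ : MeasurePreserving φ μ ν) {f : β → G} (hf : AEStronglyMeasurable f ν) :
    ∫ x, f (φ x) ∂μ = ∫ y, f y ∂ν := by
  rw [← hφ.map_eq] at hf ⊢
  exact (integral_map hφ.aemeasurable hf).symm

section Transfer

variable {α β ι : Type*} [MeasurableSpace α] [MeasurableSpace β] {μ : Measure α}
  {ν : Measure β} {φ : α → β} {ψ : β → α} {A B : ℝ}

theorem IsRieszBasisWith.of_measurePreserving {u : ι → α → ℂ} {v : ι → β → ℂ}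
    (hφ : MeasurePreserving φ μ ν) (hψ : MeasurePreserving ψ ν μ) (hψφ : ∀ᵐ x ∂μ, ψ (φ x) = x)
    (hv : ∀ n, AEStronglyMeasurable (v n) ν) (hu : ∀ n, u n =ᵐ[μ] v n ∘ φ)
    (h : IsRieszBasisWith ν v A B) : IsRieszBasisWith μ u A B := by
  obtain ⟨hA, hAB, hsynthesis, hframe⟩ := h
  refine ⟨hA, hAB, fun s c => ?_, fun w hw => ?_⟩
  · have hsum : (fun x => ‖∑ n ∈ s, c n * u n x‖ ^ 2)
        =ᵐ[μ] fun x => ‖∑ n ∈ s, c n * v n (φ x)‖ ^ 2 := by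
      filter_upwards [(Filter.eventually_all_finset s).2 fun n _ => hu n] with x hx
      rw [Finset.sum_congr rfl fun n hn => by rw [hx n hn, Function.comp_apply]]
    have hmeas : AEStronglyMeasurable (fun y => ‖∑ n ∈ s, c n * v n y‖ ^ 2) ν :=
      (Finset.aestronglyMeasurable_fun_sum s fun n _ =>
        aestronglyMeasurable_const.mul (hv n)).norm.pow 2
    rw [integral_congr_ae hsum, hφ.integral_comp_of_aestronglyMeasurable hmeas]
    exact hsynthesis s c
  · have hwψ : MemLp (w ∘ ψ) 2 ν := hw.comp_measurePreserving hψ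
    have hnorm : ∫ x, ‖w x‖ ^ 2 ∂μ = ∫ y, ‖w (ψ y)‖ ^ 2 ∂ν :=
      (hψ.integral_comp_of_aestronglyMeasurable (hw.1.norm.pow 2)).symm
    have hcoeff : ∀ n, ∫ x, w x * starRingEnd ℂ (u n x) ∂μ
        = ∫ y, w (ψ y) * starRingEnd ℂ (v n y) ∂ν := fun n => by
      rw [← hφ.integral_comp_of_aestronglyMeasurable
        (f := fun y => w (ψ y) * starRingEnd ℂ (v n y))
        (hwψ.1.mul (continuous_conj.comp_aestronglyMeasurable (hv n)))]
      refine integral_congr_ae ?_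
      filter_upwards [hu n, hψφ] with x hx hx'
      simp only [hx, hx', Function.comp_apply]
    simp only [hnorm, hcoeff]
    exact hframe _ hwψ

theorem isRieszBasisWith_iff_of_measurePreserving {u : ι → α → ℂ} {v : ι → β → ℂ}
    (hφ : MeasurePreserving φ μ ν) (hψ : MeasurePreserving ψ ν μ)
    (hψφ : ∀ᵐ x ∂μ, ψ (φ x) = x) (hφψ : ∀ᵐ y ∂ν, φ (ψ y) = y)
    (hv : ∀ n, AEStronglyMeasurable (v n) ν) (hu : ∀ n, u n =ᵐ[μ] v n ∘ φ) :
    IsRieszBasisWith μ u A B ↔ IsRieszBasisWith ν v A B := by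
  have hv' : ∀ n, v n =ᵐ[ν] u n ∘ ψ := fun n => by
    filter_upwards [hψ.quasiMeasurePreserving.ae_eq (hu n), hφψ] with y hy hy'
    simp only [Function.comp_apply] at hy ⊢
    rw [hy, hy']
  exact ⟨.of_measurePreserving hψ hφ hφψ (fun n => ((hv n).comp_measurePreserving hφ).congr
    (hu n).symm) hv', .of_measurePreserving hφ hψ hψφ hv hu⟩

end Transfer

theorem tsum_indicator_eq_of_mem {ι α M : Type*} [AddCommMonoid M] [TopologicalSpace M]
    {S : ι → Set α} (hS : Pairwise (Disjoint on S)) (f : ι → α → M) {k : ι} {x : α}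
    (hx : x ∈ S k) : ∑' i, (S i).indicator (f i) x = f k x := by
  rw [tsum_eq_single k fun i hik => indicator_of_notMem (disjoint_left.1 (hS hik.symm) hx) _,
    indicator_of_mem hx]

theorem preimage_add_neg_eq_of_preimage_add_eq {s t : Set ℝ} {c : ℝ} (h : (· + c) ⁻¹' t = s) :
    (· + -c) ⁻¹' s = t := by
  subst h
  ext x
  simp

theorem MeasurableSet.of_preimage_add_eq {s t : Set ℝ} {c : ℝ} (hs : MeasurableSet s)
    (h : (· + c) ⁻¹' t = s) : MeasurableSet t := by
  rw [← preimage_add_neg_eq_of_preimage_add_eq h]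
  exact measurable_add_const _ hs

section PiecewiseTranslate

variable {ι : Type*} {S T : ι → Set ℝ} {c : ι → ℝ}

noncomputable def piecewiseTranslate (S : ι → Set ℝ) (c : ι → ℝ) (x : ℝ) : ℝ :=
  x + ∑' k, (S k).indicator (fun _ => c k) x

theorem piecewiseTranslate_of_mem (hS : Pairwise (Disjoint on S)) {k : ι} {x : ℝ}
    (hx : x ∈ S k) : piecewiseTranslate S c x = x + c k := by
  rw [piecewiseTranslate, tsum_indicator_eq_of_mem hS _ hx]

theorem piecewiseTranslate_neg_piecewiseTranslate (hS : Pairwise (Disjoint on S))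
    (hT : Pairwise (Disjoint on T)) (hST : ∀ k, (· + c k) ⁻¹' T k = S k) {k : ι} {x : ℝ}
    (hx : x ∈ S k) : piecewiseTranslate T (-c) (piecewiseTranslate S c x) = x := by
  have hxT : x + c k ∈ T k := by rw [← hST k] at hx; exact hx
  rw [piecewiseTranslate_of_mem hS hx, piecewiseTranslate_of_mem hT hxT, Pi.neg_apply,
    add_neg_cancel_right]

variable [Countable ι]

theorem measurable_piecewiseTranslate (hSm : ∀ k, MeasurableSet (S k)) :
    Measurable (piecewiseTranslate S c) :=
  measurable_id.add (Measurable.tsum fun k => measurable_const.indicator (hSm k))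

theorem measurePreserving_piecewiseTranslate (hSm : ∀ k, MeasurableSet (S k))
    (hS : Pairwise (Disjoint on S)) (hT : Pairwise (Disjoint on T))
    (hST : ∀ k, (· + c k) ⁻¹' T k = S k) :
    MeasurePreserving (piecewiseTranslate S c) (volume.restrict (⋃ k, S k))
      (volume.restrict (⋃ k, T k)) := by
  have hTm : ∀ k, MeasurableSet (T k) := fun k => (hSm k).of_preimage_add_eq (hST k)
  have hpiece : ∀ k, (volume.restrict (S k)).map (piecewiseTranslate S c)
      = volume.restrict (T k) := fun k => by
    have htranslate : piecewiseTranslate S c =ᵐ[volume.restrict (S k)] (· + c k) :=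
      ae_restrict_of_forall_mem (hSm k) fun x hx => piecewiseTranslate_of_mem hS hx
    rw [Measure.map_congr htranslate, ← hST k]
    exact ((measurePreserving_add_right volume (c k)).restrict_preimage (hTm k)).map_eq
  refine ⟨measurable_piecewiseTranslate hSm, ?_⟩
  rw [Measure.restrict_iUnion hS hSm, Measure.restrict_iUnion hT hTm,
    Measure.map_sum (measurable_piecewiseTranslate hSm).aemeasurable]
  simp only [hpiece]

theorem isRieszBasisWith_iff_of_piecewiseTranslate {κ : Type*} {u v : κ → ℝ → ℂ} {A B : ℝ}
    (hSm : ∀ k, MeasurableSet (S k)) (hS : Pairwise (Disjoint on S))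
    (hT : Pairwise (Disjoint on T)) (hST : ∀ k, (· + c k) ⁻¹' T k = S k)
    (hv : ∀ n, AEStronglyMeasurable (v n) (volume.restrict (⋃ k, T k)))
    (hu : ∀ n k, ∀ x ∈ S k, u n x = v n (x + c k)) :
    IsRieszBasisWith (volume.restrict (⋃ k, S k)) u A B ↔
      IsRieszBasisWith (volume.restrict (⋃ k, T k)) v A B := by
  have hTS : ∀ k, (· + (-c) k) ⁻¹' S k = T k := fun k =>
    preimage_add_neg_eq_of_preimage_add_eq (hST k)
  have hTm : ∀ k, MeasurableSet (T k) := fun k => (hSm k).of_preimage_add_eq (hST k)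
  refine isRieszBasisWith_iff_of_measurePreserving
    (measurePreserving_piecewiseTranslate hSm hS hT hST)
    (measurePreserving_piecewiseTranslate hTm hT hS hTS) ?_ ?_ hv fun n => ?_
  · refine ae_restrict_of_forall_mem (.iUnion hSm) fun x hx => ?_
    obtain ⟨k, hk⟩ := mem_iUnion.1 hx
    exact piecewiseTranslate_neg_piecewiseTranslate hS hT hST hk
  · refine ae_restrict_of_forall_mem (.iUnion hTm) fun y hy => ?_
    obtain ⟨k, hk⟩ := mem_iUnion.1 hy
    simpa only [neg_neg] using piecewiseTranslate_neg_piecewiseTranslate hT hS hTS hk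
  · refine ae_restrict_of_forall_mem (.iUnion hSm) fun x hx => ?_
    obtain ⟨k, hk⟩ := mem_iUnion.1 hx
    rw [hu n k x hk, Function.comp_apply, piecewiseTranslate_of_mem hS hk]

end PiecewiseTranslate

theorem exists_mem_Ico_succ_of_lt {β : Type*} [LinearOrder β] {a : ℕ → β} {x : β}
    (h0 : a 0 ≤ x) : ∀ {j : ℕ}, x < a j → ∃ k < j, x ∈ Ico (a k) (a (k + 1))
  | 0, hx => absurd h0 hx.not_ge
  | k + 1, hx => by
    by_cases hk : a k ≤ x
    · exact ⟨k, k.lt_succ_self, hk, hx⟩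
    · obtain ⟨i, hik, hi⟩ := exists_mem_Ico_succ_of_lt h0 (not_le.1 hk)
      exact ⟨i, hik.trans k.lt_succ_self, hi⟩

section Partition

variable {m : ℕ∞} {a : ℕ → ℝ}

theorem exists_le_lt_iff_lt_one (hmono : ∀ j k : ℕ, j ≤ k → (k : ℕ∞) ≤ m → a j ≤ a k)
    (hfin : ∀ M : ℕ, m = (M : ℕ∞) → a M = 1) (hinf : m = ⊤ → (⨆ j, a j) = 1) {x : ℝ} :
    (∃ j : ℕ, (j : ℕ∞) ≤ m ∧ x < a j) ↔ x < 1 := by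
  induction m using ENat.recTopCoe with
  | top =>
    have hbdd : BddAbove (range a) := by
      by_contra hbdd
      simpa [Real.iSup_of_not_bddAbove hbdd] using hinf rfl
    rw [← hinf rfl]
    exact ⟨fun ⟨j, _, hj⟩ => hj.trans_le (le_ciSup hbdd j),
      fun hx => (exists_lt_of_lt_ciSup hx).imp fun j hj => ⟨le_top, hj⟩⟩
  | coe M =>
    rw [← hfin M rfl]
    exact ⟨fun ⟨j, hj, hxj⟩ => hxj.trans_le (hmono j M (by exact_mod_cast hj) le_rfl),
      fun hx => ⟨M, le_rfl, hx⟩⟩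

theorem iUnion_Ico_succ_eq_Ico (hmono : ∀ j k : ℕ, j ≤ k → (k : ℕ∞) ≤ m → a j ≤ a k)
    (hfin : ∀ M : ℕ, m = (M : ℕ∞) → a M = 1) (hinf : m = ⊤ → (⨆ j, a j) = 1) :
    ⋃ k : {k : ℕ // (k : ℕ∞) < m}, Ico (a k) (a (k + 1)) = Ico (a 0) 1 := by
  ext x
  simp only [mem_iUnion, Subtype.exists]
  constructor
  · rintro ⟨k, hk, hxk, hxk'⟩
    have hk' : ((k + 1 : ℕ) : ℕ∞) ≤ m := by exact_mod_cast Order.add_one_le_of_lt hk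
    exact ⟨(hmono 0 k k.zero_le hk.le).trans hxk,
      (exists_le_lt_iff_lt_one hmono hfin hinf).1 ⟨k + 1, hk', hxk'⟩⟩
  · rintro ⟨h0, h1⟩
    obtain ⟨j, hj, hxj⟩ := (exists_le_lt_iff_lt_one hmono hfin hinf).2 h1
    obtain ⟨k, hkj, hk⟩ := exists_mem_Ico_succ_of_lt h0 hxj
    exact ⟨k, lt_of_lt_of_le (by exact_mod_cast hkj) hj, hk⟩

theorem pairwise_disjoint_Ico_add (hmono : ∀ j k : ℕ, j ≤ k → (k : ℕ∞) ≤ m → a j ≤ a k)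
    {b : ℕ → ℝ} (hb : ∀ j k : ℕ, j < k → (k : ℕ∞) < m → b j ≤ b k) :
    Pairwise (Disjoint on fun k : {k : ℕ // (k : ℕ∞) < m} =>
      Ico (a k + b k) (a (k + 1) + b k)) := by
  refine (pairwise_disjoint_on _).2 fun k l hkl => disjoint_left.2 fun x hxk hxl => ?_
  have hakl := hmono (k + 1) l hkl l.2.le
  have hbkl := hb k l hkl l.2
  linarith [hxk.2, hxl.1]

end Partition

theorem continuous_e2 : Continuous e2 := by
  unfold e2
  fun_prop

theorem stmt_7_general (m : ℕ∞) (a b : ℕ → ℝ)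
    (ha0 : a 0 = 0)
    (hamono : ∀ j k : ℕ, j < k → (k : ℕ∞) ≤ m → a j < a k)
    (hafin : ∀ M : ℕ, m = (M : ℕ∞) → a M = 1)
    (hainf : m = ⊤ → (⨆ j, a j) = 1)
    (hbmono : ∀ j k : ℕ, j < k → (k : ℕ∞) < m → b j < b k)
    (J : Set ℝ)
    (hJ : J = ⋃ j ∈ {j : ℕ | (j : ℕ∞) < m}, Set.Ico (a j + b j) (a (j + 1) + b j))
    (lam : ℤ → ℝ)
    (g gt : ℤ → ℝ → ℂ)
    (hg : g = fun (n : ℤ) (x : ℝ) =>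
      ∑' k : {k : ℕ // (k : ℕ∞) < m},
        Set.indicator (Set.Ico (a k + b k) (a (k + 1) + b k))
          (fun y => e2 ((y - b k) * lam n)) x)
    (hgt : gt = fun (n : ℤ) (x : ℝ) =>
      ∑' k : {k : ℕ // (k : ℕ∞) < m},
        Set.indicator (Set.Ico (a k) (a (k + 1)))
          (fun y => e2 ((y + b k) * lam n)) x) :
    (∀ A B : ℝ,
      IsRieszBasisWith (volume.restrict J) g A B ↔
      IsRieszBasisWith (volume.restrict (Set.Ico (0:ℝ) 1))
        (fun (n : ℤ) (x : ℝ) => e2 (x * lam n)) A B) ∧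
    (∀ A B : ℝ,
      IsRieszBasisWith (volume.restrict (Set.Ico (0:ℝ) 1)) gt A B ↔
      IsRieszBasisWith (volume.restrict J)
        (fun (n : ℤ) (x : ℝ) => e2 (x * lam n)) A B) := by
  have hamono' : ∀ j k : ℕ, j ≤ k → (k : ℕ∞) ≤ m → a j ≤ a k := fun j k hjk hk =>
    hjk.eq_or_lt.elim (fun h => h ▸ le_rfl) fun h => (hamono j k h hk).le
  have hI : Ico (0 : ℝ) 1 = ⋃ k : {k : ℕ // (k : ℕ∞) < m}, Ico (a k) (a (k + 1)) := by
    rw [iUnion_Ico_succ_eq_Ico hamono' hafin hainf, ha0]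
  have hIdisj :
      Pairwise (Disjoint on fun k : {k : ℕ // (k : ℕ∞) < m} => Ico (a k) (a (k + 1))) := by
    simpa using pairwise_disjoint_Ico_add hamono' (b := 0) fun _ _ _ _ => le_rfl
  have hJdisj := pairwise_disjoint_Ico_add hamono' fun j k h hk => (hbmono j k h hk).le
  have hIJ : ∀ k : {k : ℕ // (k : ℕ∞) < m},
      (· + b k) ⁻¹' Ico (a k + b k) (a (k + 1) + b k) = Ico (a k) (a (k + 1)) := fun k => by
    simp
  have he : ∀ (μ : Measure ℝ) n, AEStronglyMeasurable (fun x => e2 (x * lam n)) μ :=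
    fun _ n => (continuous_e2.comp (continuous_mul_const (lam n))).aestronglyMeasurable
  subst hJ hg hgt
  rw [biUnion_eq_iUnion, hI]
  constructor
  · intro A B
    refine isRieszBasisWith_iff_of_piecewiseTranslate
      (c := fun k : {k : ℕ // (k : ℕ∞) < m} => -b k) (fun _ => measurableSet_Ico) hJdisj hIdisj
      (fun k => preimage_add_neg_eq_of_preimage_add_eq (hIJ k)) (fun n => he _ n)
      fun n k y hy => ?_
    rw [tsum_indicator_eq_of_mem hJdisj _ hy, sub_eq_add_neg]
  · intro A B
    refine isRieszBasisWith_iff_of_piecewiseTranslate (fun _ => measurableSet_Ico) hIdisj hJdisj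
      hIJ (fun n => he _ n) fun n k x hx => ?_
    rw [tsum_indicator_eq_of_mem hIdisj _ hx]

/-- Lemma: `{gₙ}`, with `gₙ = ∑ₖ e^{2πi(x−bₖ)λₙ}χ_{Jₖ}`, is a Riesz basis for `L²(J)`
iff `{e^{2πixλₙ}}` is a Riesz basis for `L²([0,1))`, with the same constants; and
`{g̃ₙ}`, with `g̃ₙ = ∑ₖ e^{2πi(x+bₖ)λₙ}χ_{Iₖ}`, is a Riesz basis for `L²([0,1))`
iff `{e^{2πixλₙ}}` is a Riesz basis for `L²(J)`, with the same constants. -/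
theorem stmt_7 (m : ℕ∞) (hm : 1 ≤ m) (a b : ℕ → ℝ)
    (ha0 : a 0 = 0)
    (hamono : ∀ j k : ℕ, j < k → (k : ℕ∞) ≤ m → a j < a k)
    (hafin : ∀ M : ℕ, m = (M : ℕ∞) → a M = 1)
    (hainf : m = ⊤ → (⨆ j, a j) = 1)
    (hb0 : b 0 = 0)
    (hbmono : ∀ j k : ℕ, j < k → (k : ℕ∞) < m → b j < b k)
    (J : Set ℝ)
    (hJ : J = ⋃ j ∈ {j : ℕ | (j : ℕ∞) < m}, Set.Ico (a j + b j) (a (j + 1) + b j))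
    (lam : ℤ → ℝ)
    (g gt : ℤ → ℝ → ℂ)
    (hg : g = fun (n : ℤ) (x : ℝ) =>
      ∑' k : {k : ℕ // (k : ℕ∞) < m},
        Set.indicator (Set.Ico (a k + b k) (a (k + 1) + b k))
          (fun y => e2 ((y - b k) * lam n)) x)
    (hgt : gt = fun (n : ℤ) (x : ℝ) =>
      ∑' k : {k : ℕ // (k : ℕ∞) < m},
        Set.indicator (Set.Ico (a k) (a (k + 1)))
          (fun y => e2 ((y + b k) * lam n)) x) :
    (∀ A B : ℝ,
      IsRieszBasisWith (volume.restrict J) g A B ↔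
      IsRieszBasisWith (volume.restrict (Set.Ico (0:ℝ) 1))
        (fun (n : ℤ) (x : ℝ) => e2 (x * lam n)) A B) ∧
    (∀ A B : ℝ,
      IsRieszBasisWith (volume.restrict (Set.Ico (0:ℝ) 1)) gt A B ↔
      IsRieszBasisWith (volume.restrict J)
        (fun (n : ℤ) (x : ℝ) => e2 (x * lam n)) A B) :=
  stmt_7_general m a b ha0 hamono hafin hainf hbmono J hJ lam g gt hg hgt
end
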